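/- Let α ≥ 2 and β ≥ 1. Then the residual map t ↦ R(t) := ‖Au_t − f‖_H and the regularizer map t ↦ J(t) := J(u_t), where u_t denotes any minimizer of E_t^{α,β}(·;f), are Lipschitz continuous on (δ,∞) for every δ > 0. -/

import Mathlib

open Filter Topology Set
open scoped ENNReal RealInnerProductSpace

noncomputable section

/-- The variational energy `E_t^{α,β}(u; f)`. -/
def En {X : Type*} [NormedAddCommGroup X] [NormedSpace ℝ X]
    {H : Type*} [NormedAddCommGroup H] [InnerProductSpace ℝ H]
    (A : X →L[ℝ] H) (J : X → ℝ≥0∞) (f : H) (t α β : ℝ) (u : X) : ℝ≥0∞ :=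
  ENNReal.ofReal ((1 / α) * ‖A u - f‖ ^ α) + ENNReal.ofReal (t / β) * J u ^ β

/-- `u` is a minimizer of `E_t^{α,β}(·; f)`. -/
def IsMinimizer {X : Type*} [NormedAddCommGroup X] [NormedSpace ℝ X]
    {H : Type*} [NormedAddCommGroup H] [InnerProductSpace ℝ H]
    (A : X →L[ℝ] H) (J : X → ℝ≥0∞) (f : H) (t α β : ℝ) (u : X) : Prop :=
  ∀ v, En A J f t α β u ≤ En A J f t α β v

/-- `J` is proper. -/
def IsProperFn {X : Type*} (J : X → ℝ≥0∞) : Prop := ∃ u, J u ≠ ⊤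

/-- `J` is absolutely one-homogeneous. -/
def AbsOneHom {X : Type*} [NormedAddCommGroup X] [NormedSpace ℝ X] (J : X → ℝ≥0∞) : Prop :=
  ∀ (c : ℝ) (u : X), J (c • u) = ENNReal.ofReal |c| * J u

/-- `J` is convex. -/
def EConvexFn {X : Type*} [NormedAddCommGroup X] [NormedSpace ℝ X] (J : X → ℝ≥0∞) : Prop :=
  ∀ (u v : X) (a b : ℝ), 0 ≤ a → 0 ≤ b → a + b = 1 →
    J (a • u + b • v) ≤ ENNReal.ofReal a * J u + ENNReal.ofReal b * J v

/-- The subdifferential of `J` at `u`; dual elements are represented as `X →L[ℝ] ℝ`. -/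
def subdiff {X : Type*} [NormedAddCommGroup X] [NormedSpace ℝ X]
    (J : X → ℝ≥0∞) (u : X) : Set (X →L[ℝ] ℝ) :=
  {p | ∀ v, (J u : EReal) + ((p (v - u) : ℝ) : EReal) ≤ (J v : EReal)}

/-- The adjoint `A* q` as an element of the dual of `X`. -/
def Astar {X : Type*} [NormedAddCommGroup X] [NormedSpace ℝ X]
    {H : Type*} [NormedAddCommGroup H] [InnerProductSpace ℝ H]
    (A : X →L[ℝ] H) (q : H) : X →L[ℝ] ℝ :=
  (innerSL ℝ q).comp A

/-- The set of norms `‖q‖` of source elements `q` for solutions of `Au = f`. -/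
def SourceNorms {X : Type*} [NormedAddCommGroup X] [NormedSpace ℝ X]
    {H : Type*} [NormedAddCommGroup H] [InnerProductSpace ℝ H]
    (A : X →L[ℝ] H) (J : X → ℝ≥0∞) (f : H) : Set ℝ :=
  {r | ∃ (u : X) (q : H), J u ≠ ⊤ ∧ A u = f ∧ Astar A q ∈ subdiff J u ∧ r = ‖q‖}

/-- The weak-star topology on the dual `Y →L[ℝ] ℝ` of `Y`. -/
def weakStar (Y : Type*) [NormedAddCommGroup Y] [NormedSpace ℝ Y] :
    TopologicalSpace (Y →L[ℝ] ℝ) :=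
  TopologicalSpace.induced (fun (u : Y →L[ℝ] ℝ) (y : Y) => u y) inferInstance

/-- `J` is lower semicontinuous with respect to the weak-star topology. -/
def WeakStarLSC {Y : Type*} [NormedAddCommGroup Y] [NormedSpace ℝ Y]
    (J : (Y →L[ℝ] ℝ) → ℝ≥0∞) : Prop :=
  @LowerSemicontinuous _ _ (weakStar Y) _ J

/-- `A` is weak-star-to-weak continuous. -/
def WeakStarToWeakCont {Y : Type*} [NormedAddCommGroup Y] [NormedSpace ℝ Y]
    {H : Type*} [NormedAddCommGroup H] [InnerProductSpace ℝ H]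
    (A : (Y →L[ℝ] ℝ) →L[ℝ] H) : Prop :=
  ∀ h : H, @Continuous _ _ (weakStar Y) _ (fun u => (⟪A u, h⟫ : ℝ))

/-- Assumption 1: `‖A ·‖` is a norm on `N(J)` equivalent to the restriction of `‖·‖`. -/
def ANormEquiv {X : Type*} [NormedAddCommGroup X] [NormedSpace ℝ X]
    {H : Type*} [NormedAddCommGroup H] [InnerProductSpace ℝ H]
    (A : X →L[ℝ] H) (J : X → ℝ≥0∞) : Prop :=
  ∃ c > (0:ℝ), ∃ C > (0:ℝ), ∀ u, J u = 0 → c * ‖u‖ ≤ ‖A u‖ ∧ ‖A u‖ ≤ C * ‖u‖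

/-- `PA` is the `A`-orthogonal projection onto `N(J)`. -/
def IsAProj {X : Type*} [NormedAddCommGroup X] [NormedSpace ℝ X]
    {H : Type*} [NormedAddCommGroup H] [InnerProductSpace ℝ H]
    (A : X →L[ℝ] H) (J : X → ℝ≥0∞) (PA : H → X) : Prop :=
  ∀ g : H, J (PA g) = 0 ∧ (∀ u, J u = 0 → ‖A (PA g) - g‖ ≤ ‖A u - g‖) ∧
    (∀ u, J u = 0 → ‖A u - g‖ ≤ ‖A (PA g) - g‖ → u = PA g)

/-- Assumption 2: generalized Poincaré inequality. -/
def PoincareIneq {X : Type*} [NormedAddCommGroup X] [NormedSpace ℝ X]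
    {H : Type*} [NormedAddCommGroup H] [InnerProductSpace ℝ H]
    (A : X →L[ℝ] H) (J : X → ℝ≥0∞) (PA : H → X) : Prop :=
  ∃ C > (0:ℝ), ∀ u, ENNReal.ofReal ‖u - PA (A u)‖ ≤ ENNReal.ofReal C * J u

/-!
For `s < t` let `u`, `v` minimize `E_s`, `E_t`. Testing the minimality of `u` against
`(1 - c) • u + c • v` and of `v` against `c • u + (1 - c) • v`, and using the convexity of `J`,
gives two estimates. At `c = 1/2`, the midpoint defect of `‖·‖^α` at the residuals `A u - f` and
`A v - f` is at most `(t - s) / (2 s)` times the increase `‖A v - f‖^α - ‖A u - f‖^α` of the data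
term; as `‖·‖^α` is uniformly convex for `α ≥ 2` (parallelogram law), this bounds
`‖A v - f‖ - ‖A u - f‖` by `C (t - s) / s`. For `β > 1`, the first-order condition at `c = 0`
reads `s J(u)^(β-1) ≤ t J(v)^(β-1)`, so `log J(u) - log J(v) ≤ log (t / s) / (β - 1)`; for
`β = 1`, comparing `E_s(u)` with `E_s(v)` bounds `s (J(u) - J(v))` by the increase of the data
term. Comparing with `0` bounds residuals and regularizer values uniformly for `t ≥ δ`.
-/

lemma rpow_eq_rpow_sub_one_mul {p x : ℝ} (hp : 1 ≤ p) (hx : 0 ≤ x) :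
    x ^ p = x ^ (p - 1) * x := by
  conv_lhs => rw [← sub_add_cancel p 1]
  rw [Real.rpow_add' hx (by linarith), Real.rpow_one]

lemma sq_rpow_div_two {x : ℝ} (hx : 0 ≤ x) (q : ℝ) : (x ^ 2) ^ (q / 2) = x ^ q := by
  rw [← Real.rpow_natCast_mul hx]
  congr 1
  push_cast
  ring

lemma rpow_sub_rpow_le_mul_sub {p x y : ℝ} (hp : 1 ≤ p) (hy : 0 ≤ y) (hyx : y ≤ x) :
    x ^ p - y ^ p ≤ p * x ^ (p - 1) * (x - y) := by
  rcases hyx.eq_or_lt with rfl | hlt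
  · simp
  have hslope := (convexOn_rpow hp).slope_le_of_hasDerivAt hy (hy.trans hyx) hlt
    (Real.hasDerivAt_rpow_const (Or.inr hp))
  rwa [slope_def_field, div_le_iff₀ (sub_pos.2 hlt)] at hslope

lemma rpow_sub_one_mul_sub_le_rpow_sub_rpow {p x y : ℝ} (hp : 1 ≤ p) (hy : 0 ≤ y)
    (hyx : y ≤ x) : x ^ (p - 1) * (x - y) ≤ x ^ p - y ^ p := by
  have hmono : y ^ (p - 1) ≤ x ^ (p - 1) := Real.rpow_le_rpow hy hyx (by linarith)
  rw [rpow_eq_rpow_sub_one_mul hp (hy.trans hyx), rpow_eq_rpow_sub_one_mul hp hy]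
  nlinarith

lemma norm_smul_add_smul_rpow_le {E : Type*} [SeminormedAddCommGroup E] [NormedSpace ℝ E]
    {p a b : ℝ} (hp : 1 ≤ p) (ha : 0 ≤ a) (hb : 0 ≤ b) (hab : a + b = 1) (x y : E) :
    ‖a • x + b • y‖ ^ p ≤ a * ‖x‖ ^ p + b * ‖y‖ ^ p := by
  have htri : ‖a • x + b • y‖ ≤ a * ‖x‖ + b * ‖y‖ := by
    simpa [norm_smul, abs_of_nonneg ha, abs_of_nonneg hb] using norm_add_le (a • x) (b • y)
  calc ‖a • x + b • y‖ ^ p ≤ (a * ‖x‖ + b * ‖y‖) ^ p :=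
        Real.rpow_le_rpow (norm_nonneg _) htri (by linarith)
    _ ≤ a * ‖x‖ ^ p + b * ‖y‖ ^ p :=
        (convexOn_rpow hp).2 (norm_nonneg x) (norm_nonneg y) ha hb hab

lemma sq_norm_sub_mul_rpow_le {H : Type*} [NormedAddCommGroup H] [InnerProductSpace ℝ H]
    {α : ℝ} (hα : 2 ≤ α) (a b : H) :
    ‖a - b‖ ^ 2 * ((‖a‖ + ‖b‖) / 2) ^ (α - 2)
      ≤ 2 * (‖a‖ ^ α + ‖b‖ ^ α - 2 * ‖(1 / 2 : ℝ) • a + (1 / 2 : ℝ) • b‖ ^ α) := by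
  have hp : 1 ≤ α / 2 := by linarith
  set S := (‖a‖ ^ 2 + ‖b‖ ^ 2) / 2
  set P := ‖(1 / 2 : ℝ) • a + (1 / 2 : ℝ) • b‖ ^ 2
  set m := (‖a‖ + ‖b‖) / 2
  have hSP : S - P = ‖a - b‖ ^ 2 / 4 := by
    have := parallelogram_law_with_norm ℝ a b
    simp only [P, S, ← smul_add, norm_smul]
    norm_num
    nlinarith
  have hmean : 2 * S ^ (α / 2) ≤ ‖a‖ ^ α + ‖b‖ ^ α := by
    have := (convexOn_rpow hp).2 (sq_nonneg ‖a‖) (sq_nonneg ‖b‖)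
      (by norm_num : (0 : ℝ) ≤ 1 / 2) (by norm_num : (0 : ℝ) ≤ 1 / 2) (by norm_num)
    simp only [smul_eq_mul, sq_rpow_div_two (norm_nonneg _)] at this
    have hS : 1 / 2 * ‖a‖ ^ 2 + 1 / 2 * ‖b‖ ^ 2 = S := by ring
    linarith [hS ▸ this]
  have hgap : S ^ (α / 2 - 1) * (‖a - b‖ ^ 2 / 4) ≤ S ^ (α / 2) - P ^ (α / 2) := by
    rw [← hSP]
    exact rpow_sub_one_mul_sub_le_rpow_sub_rpow hp (sq_nonneg _)
      (by linarith [sq_nonneg ‖a - b‖])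
  have hm : m ^ (α - 2) ≤ S ^ (α / 2 - 1) := by
    have : (m ^ 2) ^ ((α - 2) / 2) ≤ S ^ ((α - 2) / 2) :=
      Real.rpow_le_rpow (sq_nonneg m) (by simp only [m, S]; nlinarith [sq_nonneg (‖a‖ - ‖b‖)])
        (by linarith)
    rwa [sq_rpow_div_two (by positivity), sub_div, div_self two_ne_zero] at this
  rw [show P ^ (α / 2) = ‖(1 / 2 : ℝ) • a + (1 / 2 : ℝ) • b‖ ^ α from
    sq_rpow_div_two (norm_nonneg _) α] at hgap
  have := mul_le_mul_of_nonneg_right hm (by positivity : (0 : ℝ) ≤ ‖a - b‖ ^ 2 / 4)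
  nlinarith

lemma sub_le_of_sq_mul_rpow_le {α c x y d : ℝ} (hα : 2 ≤ α) (hx : 0 ≤ x) (hxy : x ≤ y)
    (hd : y - x ≤ d) (hc : 0 ≤ c) (h : d ^ 2 * ((x + y) / 2) ^ (α - 2) ≤ c * (y ^ α - x ^ α)) :
    y - x ≤ c * α * 2 ^ (α - 2) * y := by
  rcases hxy.eq_or_lt with rfl | hlt
  · simp only [sub_self]
    have := hx
    positivity
  set M := ((x + y) / 2) ^ (α - 2)
  have hM : 0 < M := Real.rpow_pos_of_pos (by linarith) _
  have hpow : y ^ (α - 1) ≤ 2 ^ (α - 2) * M * y := by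
    have : y ^ (α - 2) ≤ 2 ^ (α - 2) * M := by
      rw [← Real.mul_rpow (by norm_num) (by linarith)]
      exact Real.rpow_le_rpow (by linarith) (by linarith) (by linarith)
    rw [rpow_eq_rpow_sub_one_mul (by linarith) (by linarith), sub_sub, one_add_one_eq_two]
    exact mul_le_mul_of_nonneg_right this (by linarith)
  have hsq : (y - x) ^ 2 ≤ d ^ 2 := pow_le_pow_left₀ (by linarith) hd 2
  have hchain : (y - x) * ((y - x) * M) ≤ (c * α * 2 ^ (α - 2) * y) * ((y - x) * M) :=
    calc (y - x) * ((y - x) * M) = (y - x) ^ 2 * M := by ring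
      _ ≤ d ^ 2 * M := by gcongr
      _ ≤ c * (y ^ α - x ^ α) := h
      _ ≤ c * (α * y ^ (α - 1) * (y - x)) := by
          gcongr
          exact rpow_sub_rpow_le_mul_sub (by linarith) hx hxy
      _ ≤ c * (α * (2 ^ (α - 2) * M * y) * (y - x)) := by gcongr
      _ = (c * α * 2 ^ (α - 2) * y) * ((y - x) * M) := by ring
  exact le_of_mul_le_mul_right hchain (mul_pos (sub_pos.2 hlt) hM)

lemma mul_rpow_sub_one_le_of_forall_le {β s t x y : ℝ} (hβ : 1 ≤ β) (hyx : y < x)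
    (h : ∀ c ∈ Icc (0 : ℝ) 1, s * x ^ β + t * y ^ β
      ≤ s * ((1 - c) * x + c * y) ^ β + t * (c * x + (1 - c) * y) ^ β) :
    s * x ^ (β - 1) ≤ t * y ^ (β - 1) := by
  set k : ℝ → ℝ := fun c ↦ s * ((1 - c) * x + c * y) ^ β + t * (c * x + (1 - c) * y) ^ β
  have hmin : IsLocalMinOn k (Icc 0 1) 0 :=
    IsMinOn.localize fun c hc ↦ by simpa [k] using h c hc
  have hderiv : HasDerivAt k (β * (x - y) * (t * y ^ (β - 1) - s * x ^ (β - 1))) 0 := by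
    have h₁ : HasDerivAt (fun c : ℝ ↦ (1 - c) * x + c * y) (y - x) 0 := by
      have hf : (fun c : ℝ ↦ (1 - c) * x + c * y) = fun c ↦ x + c * (y - x) := by
        funext c
        ring
      simpa [hf] using ((hasDerivAt_id' (0 : ℝ)).mul_const (y - x)).const_add x
    have h₂ : HasDerivAt (fun c : ℝ ↦ c * x + (1 - c) * y) (x - y) 0 := by
      have hf : (fun c : ℝ ↦ c * x + (1 - c) * y) = fun c ↦ y + c * (x - y) := by
        funext c
        ring
      simpa [hf] using ((hasDerivAt_id' (0 : ℝ)).mul_const (x - y)).const_add y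
    exact (((h₁.rpow_const (Or.inr hβ)).const_mul s).add
      ((h₂.rpow_const (Or.inr hβ)).const_mul t)).congr_deriv (by norm_num; ring)
  have hcone : (1 : ℝ) ∈ posTangentConeAt (Icc (0 : ℝ) 1) 0 :=
    mem_posTangentConeAt_of_segment_subset (by simp [segment_eq_Icc])
  have hnonneg := hmin.hasFDerivWithinAt_nonneg hderiv.hasDerivWithinAt.hasFDerivWithinAt hcone
  rw [ContinuousLinearMap.toSpanSingleton_apply, one_smul] at hnonneg
  have hpos : 0 < β * (x - y) := mul_pos (by linarith) (sub_pos.2 hyx)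
  linarith [(mul_nonneg_iff_of_pos_left hpos).1 hnonneg]

lemma sub_le_mul_div_of_mul_rpow_le {e s t x y : ℝ} (he : 0 < e) (hs : 0 < s)
    (hy : 0 ≤ y) (hyx : y ≤ x) (h : s * x ^ e ≤ t * y ^ e) :
    x - y ≤ x * (t - s) / (e * s) := by
  rcases (hy.trans hyx).eq_or_lt with hx | hx
  · rw [← hx] at hyx ⊢
    simp [le_antisymm hyx hy]
  have hy' : 0 < y := by
    by_contra! hy'
    rw [le_antisymm hy' hy, Real.zero_rpow he.ne', mul_zero] at h
    linarith [mul_pos hs (Real.rpow_pos_of_pos hx e)]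
  have hratio : (x / y) ^ e ≤ t / s := by
    rw [Real.div_rpow hx.le hy, div_le_div_iff₀ (Real.rpow_pos_of_pos hy' e) hs]
    linarith
  have hlog : e * ((x - y) / x) ≤ (t - s) / s :=
    calc e * ((x - y) / x) ≤ e * Real.log (x / y) := by
          gcongr
          simpa [inv_div, one_sub_div hx.ne'] using
            Real.one_sub_inv_le_log_of_pos (div_pos hx hy')
      _ = Real.log ((x / y) ^ e) := (Real.log_rpow (div_pos hx hy') e).symm
      _ ≤ Real.log (t / s) := Real.log_le_log (Real.rpow_pos_of_pos (div_pos hx hy') e) hratio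
      _ ≤ t / s - 1 :=
          Real.log_le_sub_one_of_pos ((Real.rpow_pos_of_pos (div_pos hx hy') e).trans_le hratio)
      _ = (t - s) / s := by field_simp
  rw [le_div_iff₀ (mul_pos he hs)]
  rw [mul_div_assoc', div_le_div_iff₀ hx hs] at hlog
  linarith

lemma lipschitzOnWith_of_abs_sub_le {F : ℝ → ℝ} {S : Set ℝ} (K : ℝ)
    (h : ∀ s ∈ S, ∀ t ∈ S, s < t → |F t - F s| ≤ K * (t - s)) :
    LipschitzOnWith K.toNNReal F S := by
  refine LipschitzOnWith.of_le_add_mul' K fun x hx y hy ↦ ?_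
  rcases lt_trichotomy x y with hxy | rfl | hyx
  · have := (abs_le.1 (h x hx y hy hxy)).1
    rw [Real.dist_eq, abs_of_neg (sub_neg.2 hxy)]
    linarith
  · simp
  · have := (abs_le.1 (h y hy x hx hyx)).2
    rw [Real.dist_eq, abs_of_pos (sub_pos.2 hyx)]
    linarith

section Minimizer

variable {X H : Type*} [NormedAddCommGroup X] [NormedSpace ℝ X]
  [NormedAddCommGroup H] [InnerProductSpace ℝ H]
  {A : X →L[ℝ] H} {J : X → ℝ≥0∞} {f : H} {s t α β : ℝ} {u v : X}

lemma AbsOneHom.map_zero (hhom : AbsOneHom J) : J 0 = 0 := by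
  simpa using hhom 0 0

lemma EConvexFn.toReal_le (hconv : EConvexFn J) (hu : J u ≠ ⊤) (hv : J v ≠ ⊤) {a b : ℝ}
    (ha : 0 ≤ a) (hb : 0 ≤ b) (hab : a + b = 1) :
    J (a • u + b • v) ≠ ⊤ ∧
      (J (a • u + b • v)).toReal ≤ a * (J u).toReal + b * (J v).toReal := by
  have hle := hconv u v a b ha hb hab
  have hfin : ENNReal.ofReal a * J u + ENNReal.ofReal b * J v ≠ ⊤ := by finiteness
  refine ⟨ne_top_of_le_ne_top hfin hle, ?_⟩
  have := ENNReal.toReal_mono hfin hle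
  rwa [ENNReal.toReal_add (by finiteness) (by finiteness), ENNReal.toReal_mul,
    ENNReal.toReal_mul, ENNReal.toReal_ofReal ha, ENNReal.toReal_ofReal hb] at this

lemma ContinuousLinearMap.apply_smul_add_smul_sub (A : X →L[ℝ] H) (f : H) {a b : ℝ}
    (hab : a + b = 1) (u v : X) : A (a • u + b • v) - f = a • (A u - f) + b • (A v - f) := by
  calc A (a • u + b • v) - f = a • A u + b • A v - (a + b) • f := by simp [hab]
    _ = a • (A u - f) + b • (A v - f) := by module

lemma En_eq_ofReal (ht : 0 ≤ t) (hα : 0 ≤ α) (hβ : 0 < β) (hu : J u ≠ ⊤) :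
    En A J f t α β u = ENNReal.ofReal (1 / α * ‖A u - f‖ ^ α + t / β * (J u).toReal ^ β) := by
  rw [En, ENNReal.ofReal_add (by positivity) (by positivity),
    ENNReal.ofReal_mul (div_nonneg ht hβ.le),
    ← ENNReal.ofReal_rpow_of_nonneg ENNReal.toReal_nonneg hβ.le, ENNReal.ofReal_toReal hu]

lemma IsMinimizer.regularizer_ne_top (hu : IsMinimizer A J f t α β u) (hJ0 : J 0 = 0) (ht : 0 < t)
    (hβ : 0 < β) : J u ≠ ⊤ := by
  intro htop
  have h := hu 0
  rw [En, En, htop, hJ0, ENNReal.top_rpow_of_pos hβ,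
    ENNReal.mul_top (ENNReal.ofReal_pos.2 (div_pos ht hβ)).ne'] at h
  simp [ENNReal.zero_rpow_of_pos hβ] at h

lemma IsMinimizer.le_of_ne_top (hu : IsMinimizer A J f t α β u) (ht : 0 ≤ t) (hα : 0 ≤ α)
    (hβ : 0 < β) (hJu : J u ≠ ⊤) {z : X} (hJz : J z ≠ ⊤) :
    1 / α * ‖A u - f‖ ^ α + t / β * (J u).toReal ^ β
      ≤ 1 / α * ‖A z - f‖ ^ α + t / β * (J z).toReal ^ β := by
  have h := hu z
  rwa [En_eq_ofReal ht hα hβ hJu, En_eq_ofReal ht hα hβ hJz,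
    ENNReal.ofReal_le_ofReal_iff (by positivity)] at h

lemma IsMinimizer.le_norm_rpow (hu : IsMinimizer A J f t α β u) (hJ0 : J 0 = 0) (ht : 0 ≤ t)
    (hα : 0 ≤ α) (hβ : 0 < β) (hJu : J u ≠ ⊤) :
    1 / α * ‖A u - f‖ ^ α + t / β * (J u).toReal ^ β ≤ 1 / α * ‖f‖ ^ α := by
  simpa [hJ0, Real.zero_rpow hβ.ne'] using hu.le_of_ne_top ht hα hβ hJu (z := 0) (by simp [hJ0])

lemma IsMinimizer.residual_le (hu : IsMinimizer A J f t α β u) (hJ0 : J 0 = 0) (ht : 0 ≤ t)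
    (hα : 0 < α) (hβ : 0 < β) (hJu : J u ≠ ⊤) : ‖A u - f‖ ≤ ‖f‖ := by
  have h := hu.le_norm_rpow hJ0 ht hα.le hβ hJu
  have : 0 ≤ t / β * (J u).toReal ^ β := by positivity
  exact (Real.rpow_le_rpow_iff (norm_nonneg _) (norm_nonneg _) hα).1
    (le_of_mul_le_mul_left (by linarith) (one_div_pos.2 hα))

lemma IsMinimizer.regularizer_le (hu : IsMinimizer A J f t α β u) (hJ0 : J 0 = 0) {δ : ℝ}
    (hδ : 0 < δ) (hδt : δ ≤ t) (hα : 0 < α) (hβ : 0 < β) (hJu : J u ≠ ⊤) :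
    (J u).toReal ≤ (β * ‖f‖ ^ α / (α * δ)) ^ β⁻¹ := by
  have h := hu.le_norm_rpow hJ0 (hδ.trans_le hδt).le hα.le hβ hJu
  have : 0 ≤ 1 / α * ‖A u - f‖ ^ α := by positivity
  rw [Real.le_rpow_inv_iff_of_pos ENNReal.toReal_nonneg (by positivity) hβ,
    le_div_iff₀ (by positivity)]
  calc (J u).toReal ^ β * (α * δ) = α * (δ * (J u).toReal ^ β) := by ring
    _ ≤ α * (t * (J u).toReal ^ β) := by gcongr
    _ = α * β * (t / β * (J u).toReal ^ β) := by field_simp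
    _ ≤ α * β * (1 / α * ‖f‖ ^ α) :=
        mul_le_mul_of_nonneg_left (by linarith) (by positivity)
    _ = β * ‖f‖ ^ α := by field_simp

lemma IsMinimizer.regularizer_le_and_residual_le (hu : IsMinimizer A J f s α β u)
    (hv : IsMinimizer A J f t α β v) (hs : 0 ≤ s) (hst : s < t) (hα : 0 < α) (hβ : 0 < β)
    (hJu : J u ≠ ⊤) (hJv : J v ≠ ⊤) :
    (J v).toReal ≤ (J u).toReal ∧ ‖A u - f‖ ≤ ‖A v - f‖ := by
  have hvu := hv.le_of_ne_top (hs.trans hst.le) hα.le hβ hJv hJu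
  have huv := hu.le_of_ne_top hs hα.le hβ hJu hJv
  have hpow : (J v).toReal ^ β ≤ (J u).toReal ^ β := by
    have : (t - s) / β * (J v).toReal ^ β ≤ (t - s) / β * (J u).toReal ^ β := by
      rw [sub_div]
      linarith
    exact le_of_mul_le_mul_left this (div_pos (sub_pos.2 hst) hβ)
  have hres : ‖A u - f‖ ^ α ≤ ‖A v - f‖ ^ α := by
    have := mul_le_mul_of_nonneg_left hpow (by positivity : 0 ≤ s / β)
    exact le_of_mul_le_mul_left (by linarith) (one_div_pos.2 hα)
  exact ⟨(Real.rpow_le_rpow_iff ENNReal.toReal_nonneg ENNReal.toReal_nonneg hβ).1 hpow,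
    (Real.rpow_le_rpow_iff (norm_nonneg _) (norm_nonneg _) hα).1 hres⟩

lemma IsMinimizer.add_le_swap (hconv : EConvexFn J) (hu : IsMinimizer A J f s α β u)
    (hv : IsMinimizer A J f t α β v) (hs : 0 ≤ s) (ht : 0 ≤ t) (hα : 0 ≤ α) (hβ : 0 < β)
    (hJu : J u ≠ ⊤) (hJv : J v ≠ ⊤) {a b : ℝ} (ha : 0 ≤ a) (hb : 0 ≤ b) (hab : a + b = 1) :
    1 / α * (‖A u - f‖ ^ α + ‖A v - f‖ ^ α) + s / β * (J u).toReal ^ β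
        + t / β * (J v).toReal ^ β
      ≤ 1 / α * (‖A (a • u + b • v) - f‖ ^ α + ‖A (b • u + a • v) - f‖ ^ α)
        + s / β * (a * (J u).toReal + b * (J v).toReal) ^ β
        + t / β * (b * (J u).toReal + a * (J v).toReal) ^ β := by
  obtain ⟨hJ₁, hle₁⟩ := hconv.toReal_le hJu hJv ha hb hab
  obtain ⟨hJ₂, hle₂⟩ := hconv.toReal_le hJu hJv hb ha (by linarith)
  have hmin₁ := hu.le_of_ne_top hs hα hβ hJu hJ₁
  have hmin₂ := hv.le_of_ne_top ht hα hβ hJv hJ₂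
  have := mul_le_mul_of_nonneg_left (Real.rpow_le_rpow ENNReal.toReal_nonneg hle₁ hβ.le)
    (by positivity : 0 ≤ s / β)
  have := mul_le_mul_of_nonneg_left (Real.rpow_le_rpow ENNReal.toReal_nonneg hle₂ hβ.le)
    (by positivity : 0 ≤ t / β)
  linarith

lemma IsMinimizer.midpoint_defect_le (hconv : EConvexFn J) (hu : IsMinimizer A J f s α β u)
    (hv : IsMinimizer A J f t α β v) (hs : 0 < s) (hst : s < t) (hα : 0 < α) (hβ : 1 ≤ β)
    (hJu : J u ≠ ⊤) (hJv : J v ≠ ⊤) :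
    ‖A u - f‖ ^ α + ‖A v - f‖ ^ α - 2 * ‖A ((1 / 2 : ℝ) • u + (1 / 2 : ℝ) • v) - f‖ ^ α
      ≤ (t - s) / (2 * s) * (‖A v - f‖ ^ α - ‖A u - f‖ ^ α) := by
  have hβ0 : 0 < β := by linarith
  have ht : 0 < t := hs.trans hst
  have hmid := hu.add_le_swap hconv hv hs.le ht.le hα.le hβ0 hJu hJv
    (by norm_num : (0 : ℝ) ≤ 1 / 2) (by norm_num : (0 : ℝ) ≤ 1 / 2) (by norm_num)
  have hC2 := hu.le_of_ne_top hs.le hα.le hβ0 hJu hJv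
  set gu := (J u).toReal
  set gv := (J v).toReal
  have hjensen : (1 / 2 * gu + 1 / 2 * gv) ^ β ≤ 1 / 2 * gu ^ β + 1 / 2 * gv ^ β :=
    (convexOn_rpow hβ).2 ENNReal.toReal_nonneg ENNReal.toReal_nonneg (by norm_num)
      (by norm_num) (by norm_num)
  have hdefect : 1 / α * (‖A u - f‖ ^ α + ‖A v - f‖ ^ α
      - 2 * ‖A ((1 / 2 : ℝ) • u + (1 / 2 : ℝ) • v) - f‖ ^ α)
      ≤ (t - s) / (2 * β) * (gu ^ β - gv ^ β) := by
    have := mul_le_mul_of_nonneg_left hjensen (by positivity : 0 ≤ s / β)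
    have := mul_le_mul_of_nonneg_left hjensen (by positivity : 0 ≤ t / β)
    rw [show (t - s) / (2 * β) = t / β / 2 - s / β / 2 by ring]
    linarith
  have hJdiff : (t - s) / (2 * β) * (gu ^ β - gv ^ β)
      ≤ (t - s) / (2 * s) * (1 / α * (‖A v - f‖ ^ α - ‖A u - f‖ ^ α)) := by
    rw [show (t - s) / (2 * β) * (gu ^ β - gv ^ β)
      = (t - s) / (2 * s) * (s / β * (gu ^ β - gv ^ β)) by field_simp]
    exact mul_le_mul_of_nonneg_left (by linarith) (div_nonneg (by linarith) (by positivity))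
  refine le_of_mul_le_mul_left ?_ (one_div_pos.2 hα)
  linarith [hdefect.trans hJdiff]

lemma IsMinimizer.residual_sub_le (hconv : EConvexFn J) (hu : IsMinimizer A J f s α β u)
    (hv : IsMinimizer A J f t α β v) (hs : 0 < s) (hst : s < t) (hα : 2 ≤ α) (hβ : 1 ≤ β)
    (hJu : J u ≠ ⊤) (hJv : J v ≠ ⊤) :
    ‖A v - f‖ - ‖A u - f‖ ≤ (t - s) / s * α * 2 ^ (α - 2) * ‖A v - f‖ := by
  obtain ⟨-, hR⟩ :=
    hu.regularizer_le_and_residual_le hv hs.le hst (by linarith) (by linarith) hJu hJv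
  have hdefect := hu.midpoint_defect_le hconv hv hs hst (by linarith) hβ hJu hJv
  have hunif := sq_norm_sub_mul_rpow_le hα (A u - f) (A v - f)
  rw [← A.apply_smul_add_smul_sub f (by norm_num : (1 / 2 : ℝ) + 1 / 2 = 1)] at hunif
  refine sub_le_of_sq_mul_rpow_le hα (norm_nonneg _) hR ?_ (div_nonneg (by linarith) hs.le)
    (hunif.trans ?_)
  · exact (norm_sub_norm_le _ _).trans_eq (norm_sub_rev _ _)
  · rw [show (t - s) / s = 2 * ((t - s) / (2 * s)) by ring, mul_assoc]
    linarith

lemma IsMinimizer.abs_residual_sub_le (hconv : EConvexFn J) (hJ0 : J 0 = 0)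
    (hu : IsMinimizer A J f s α β u) (hv : IsMinimizer A J f t α β v) {δ : ℝ} (hδ : 0 < δ)
    (hδs : δ ≤ s) (hst : s < t) (hα : 2 ≤ α) (hβ : 1 ≤ β) :
    |‖A v - f‖ - ‖A u - f‖| ≤ α * 2 ^ (α - 2) * ‖f‖ / δ * (t - s) := by
  have hs : 0 < s := hδ.trans_le hδs
  have hα0 : 0 < α := by linarith
  have hβ0 : 0 < β := by linarith
  have hJu := hu.regularizer_ne_top hJ0 hs hβ0
  have hJv := hv.regularizer_ne_top hJ0 (hs.trans hst) hβ0
  obtain ⟨-, hR⟩ := hu.regularizer_le_and_residual_le hv hs.le hst hα0 hβ0 hJu hJv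
  have hRv := hv.residual_le hJ0 (hs.trans hst).le hα0 hβ0 hJv
  rw [abs_of_nonneg (sub_nonneg.2 hR)]
  calc _ ≤ (t - s) / s * α * 2 ^ (α - 2) * ‖A v - f‖ :=
        hu.residual_sub_le hconv hv hs hst hα hβ hJu hJv
    _ ≤ (t - s) / δ * α * 2 ^ (α - 2) * ‖f‖ := by
        have : 0 ≤ t - s := by linarith
        gcongr
    _ = α * 2 ^ (α - 2) * ‖f‖ / δ * (t - s) := by ring

lemma IsMinimizer.regularizer_swap_le (hconv : EConvexFn J) (hu : IsMinimizer A J f s α β u)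
    (hv : IsMinimizer A J f t α β v) (hs : 0 ≤ s) (ht : 0 ≤ t) (hα : 1 ≤ α) (hβ : 0 < β)
    (hJu : J u ≠ ⊤) (hJv : J v ≠ ⊤) {c : ℝ} (hc : c ∈ Icc (0 : ℝ) 1) :
    s * (J u).toReal ^ β + t * (J v).toReal ^ β
      ≤ s * ((1 - c) * (J u).toReal + c * (J v).toReal) ^ β
        + t * (c * (J u).toReal + (1 - c) * (J v).toReal) ^ β := by
  obtain ⟨hc₀, hc₁⟩ := hc
  have h := hu.add_le_swap hconv hv hs ht (by linarith) hβ hJu hJv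
    (sub_nonneg.2 hc₁) hc₀ (sub_add_cancel 1 c)
  rw [A.apply_smul_add_smul_sub f (sub_add_cancel 1 c),
    A.apply_smul_add_smul_sub f (add_sub_cancel c 1)] at h
  have h₁ := norm_smul_add_smul_rpow_le hα (sub_nonneg.2 hc₁) hc₀ (sub_add_cancel 1 c)
    (A u - f) (A v - f)
  have h₂ := norm_smul_add_smul_rpow_le hα hc₀ (sub_nonneg.2 hc₁) (add_sub_cancel c 1)
    (A u - f) (A v - f)
  have := mul_le_mul_of_nonneg_left (add_le_add h₁ h₂) (by positivity : 0 ≤ 1 / α)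
  rw [← div_le_div_iff_of_pos_right hβ]
  simp only [add_div, mul_div_right_comm s, mul_div_right_comm t]
  linarith

lemma IsMinimizer.regularizer_sub_le_of_one_lt (hconv : EConvexFn J)
    (hu : IsMinimizer A J f s α β u) (hv : IsMinimizer A J f t α β v) (hs : 0 < s)
    (hst : s < t) (hα : 1 ≤ α) (hβ : 1 < β) (hJu : J u ≠ ⊤) (hJv : J v ≠ ⊤) :
    (J u).toReal - (J v).toReal ≤ (J u).toReal * (t - s) / ((β - 1) * s) := by
  rcases le_or_gt (J u).toReal (J v).toReal with hle | hlt
  · have : 0 ≤ (J u).toReal * (t - s) / ((β - 1) * s) :=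
      div_nonneg (mul_nonneg ENNReal.toReal_nonneg (by linarith))
        (mul_nonneg (by linarith) hs.le)
    linarith
  exact sub_le_mul_div_of_mul_rpow_le (by linarith) hs ENNReal.toReal_nonneg hlt.le
    (mul_rpow_sub_one_le_of_forall_le hβ.le hlt fun c hc ↦
      hu.regularizer_swap_le hconv hv hs.le (hs.trans hst).le hα (by linarith) hJu hJv hc)

lemma IsMinimizer.mul_regularizer_sub_le (hu : IsMinimizer A J f s α 1 u)
    (hv : IsMinimizer A J f t α 1 v) (hs : 0 ≤ s) (hst : s < t) (hα : 1 ≤ α)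
    (hJu : J u ≠ ⊤) (hJv : J v ≠ ⊤) :
    s * ((J u).toReal - (J v).toReal) ≤ ‖A v - f‖ ^ (α - 1) * (‖A v - f‖ - ‖A u - f‖) := by
  have hα0 : 0 < α := by linarith
  obtain ⟨-, hR⟩ := hu.regularizer_le_and_residual_le hv hs hst hα0 one_pos hJu hJv
  have hC2 := hu.le_of_ne_top hs hα0.le one_pos hJu hJv
  have := mul_le_mul_of_nonneg_left (rpow_sub_rpow_le_mul_sub hα (norm_nonneg _) hR)
    (by positivity : 0 ≤ 1 / α)
  rw [show 1 / α * (α * ‖A v - f‖ ^ (α - 1) * (‖A v - f‖ - ‖A u - f‖))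
    = ‖A v - f‖ ^ (α - 1) * (‖A v - f‖ - ‖A u - f‖) by field_simp] at this
  simp only [div_one, Real.rpow_one] at hC2
  linarith

lemma IsMinimizer.abs_regularizer_sub_le_of_one_lt (hconv : EConvexFn J) (hJ0 : J 0 = 0)
    (hu : IsMinimizer A J f s α β u) (hv : IsMinimizer A J f t α β v) {δ : ℝ} (hδ : 0 < δ)
    (hδs : δ ≤ s) (hst : s < t) (hα : 1 ≤ α) (hβ : 1 < β) :
    |(J v).toReal - (J u).toReal|
      ≤ (β * ‖f‖ ^ α / (α * δ)) ^ β⁻¹ / ((β - 1) * δ) * (t - s) := by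
  have hs : 0 < s := hδ.trans_le hδs
  have hα0 : 0 < α := by linarith
  have hβ0 : 0 < β := by linarith
  have hJu := hu.regularizer_ne_top hJ0 hs hβ0
  have hJv := hv.regularizer_ne_top hJ0 (hs.trans hst) hβ0
  obtain ⟨hg, -⟩ := hu.regularizer_le_and_residual_le hv hs.le hst hα0 hβ0 hJu hJv
  rw [abs_sub_comm, abs_of_nonneg (sub_nonneg.2 hg)]
  calc (J u).toReal - (J v).toReal ≤ (J u).toReal * (t - s) / ((β - 1) * s) :=
        hu.regularizer_sub_le_of_one_lt hconv hv hs hst hα hβ hJu hJv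
    _ ≤ (β * ‖f‖ ^ α / (α * δ)) ^ β⁻¹ * (t - s) / ((β - 1) * δ) := by
        have : 0 ≤ t - s := by linarith
        have : 0 < β - 1 := by linarith
        gcongr
        exact hu.regularizer_le hJ0 hδ hδs hα0 hβ0 hJu
    _ = _ := by ring

lemma IsMinimizer.abs_regularizer_sub_le_of_eq_one (hconv : EConvexFn J) (hJ0 : J 0 = 0)
    (hu : IsMinimizer A J f s α 1 u) (hv : IsMinimizer A J f t α 1 v) {δ : ℝ} (hδ : 0 < δ)
    (hδs : δ ≤ s) (hst : s < t) (hα : 2 ≤ α) :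
    |(J v).toReal - (J u).toReal|
      ≤ ‖f‖ ^ (α - 1) * (α * 2 ^ (α - 2) * ‖f‖ / δ) / δ * (t - s) := by
  have hs : 0 < s := hδ.trans_le hδs
  have hα0 : 0 < α := by linarith
  have hJu := hu.regularizer_ne_top hJ0 hs one_pos
  have hJv := hv.regularizer_ne_top hJ0 (hs.trans hst) one_pos
  obtain ⟨hg, hR⟩ := hu.regularizer_le_and_residual_le hv hs.le hst hα0 one_pos hJu hJv
  have hRv := hv.residual_le hJ0 (hs.trans hst).le hα0 one_pos hJv
  have hres := hu.abs_residual_sub_le hconv hJ0 hv hδ hδs hst hα le_rfl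
  rw [abs_of_nonneg (sub_nonneg.2 hR)] at hres
  rw [abs_sub_comm, abs_of_nonneg (sub_nonneg.2 hg), div_mul_eq_mul_div, le_div_iff₀ hδ]
  calc ((J u).toReal - (J v).toReal) * δ ≤ s * ((J u).toReal - (J v).toReal) := by
        rw [mul_comm]
        exact mul_le_mul_of_nonneg_right hδs (sub_nonneg.2 hg)
    _ ≤ ‖A v - f‖ ^ (α - 1) * (‖A v - f‖ - ‖A u - f‖) :=
        hu.mul_regularizer_sub_le hv hs.le hst (by linarith) hJu hJv
    _ ≤ ‖f‖ ^ (α - 1) * (α * 2 ^ (α - 2) * ‖f‖ / δ * (t - s)) := by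
        gcongr
        linarith
    _ = _ := by ring

lemma exists_abs_regularizer_sub_le (hconv : EConvexFn J) (hJ0 : J 0 = 0) (hα : 2 ≤ α)
    (hβ : 1 ≤ β) {δ : ℝ} (hδ : 0 < δ) :
    ∃ K : ℝ, ∀ s t : ℝ, ∀ u v : X, δ ≤ s → s < t → IsMinimizer A J f s α β u →
      IsMinimizer A J f t α β v → |(J v).toReal - (J u).toReal| ≤ K * (t - s) := by
  rcases hβ.eq_or_lt with rfl | hβ
  · exact ⟨_, fun s t u v hδs hst hu hv ↦
      hu.abs_regularizer_sub_le_of_eq_one hconv hJ0 hv hδ hδs hst hα⟩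
  · exact ⟨_, fun s t u v hδs hst hu hv ↦
      hu.abs_regularizer_sub_le_of_one_lt hconv hJ0 hv hδ hδs hst (by linarith) hβ⟩

end Minimizer

theorem residual_and_regularizer_lipschitz_general
    {Y : Type*} [NormedAddCommGroup Y] [NormedSpace ℝ Y]
    {H : Type*} [NormedAddCommGroup H] [InnerProductSpace ℝ H]
    (A : (Y →L[ℝ] ℝ) →L[ℝ] H) (J : (Y →L[ℝ] ℝ) → ℝ≥0∞) (f : H)
    (hconv : EConvexFn J) (hhom : AbsOneHom J)
    (α β : ℝ) (hα : 2 ≤ α) (hβ : 1 ≤ β)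
    (hex : ∀ t : ℝ, 0 < t → ∃ u, IsMinimizer A J f t α β u)
    (R Jm : ℝ → ℝ)
    (hR : ∀ t : ℝ, 0 < t → ∀ u, IsMinimizer A J f t α β u → R t = ‖A u - f‖)
    (hJm : ∀ t : ℝ, 0 < t → ∀ u, IsMinimizer A J f t α β u → Jm t = (J u).toReal) :
    ∀ δ : ℝ, 0 < δ → ∃ K₁ K₂ : NNReal,
      LipschitzOnWith K₁ R (Set.Ioi δ) ∧ LipschitzOnWith K₂ Jm (Set.Ioi δ) := by
  intro δ hδ
  obtain ⟨K, hK⟩ := exists_abs_regularizer_sub_le (A := A) (f := f) hconv hhom.map_zero hα hβ hδ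
  refine ⟨_, _, lipschitzOnWith_of_abs_sub_le (α * 2 ^ (α - 2) * ‖f‖ / δ) fun s hs t ht hst ↦ ?_,
    lipschitzOnWith_of_abs_sub_le K fun s hs t ht hst ↦ ?_⟩
  all_goals
    have hs₀ : 0 < s := hδ.trans hs
    have ht₀ : 0 < t := hδ.trans ht
    obtain ⟨u, hu⟩ := hex s hs₀
    obtain ⟨v, hv⟩ := hex t ht₀
  · rw [hR s hs₀ u hu, hR t ht₀ v hv]
    exact hu.abs_residual_sub_le hconv hhom.map_zero hv hδ hs.le hst hα hβ
  · rw [hJm s hs₀ u hu, hJm t ht₀ v hv]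
    exact hK s t u v hs.le hst hu hv

/-- Corollary 3.6.
Let `α ≥ 2`, `β ≥ 1`. Then the residual map `t ↦ R(t) = ‖Au_t − f‖` and the regularizer
map `t ↦ J(t) = J(u_t)` (well-defined since minimizers share these values) are Lipschitz
continuous on `(δ,∞)` for every `δ > 0`. -/
theorem residual_and_regularizer_lipschitz
    {Y : Type*} [NormedAddCommGroup Y] [NormedSpace ℝ Y]
    {H : Type*} [NormedAddCommGroup H] [InnerProductSpace ℝ H]
    (A : (Y →L[ℝ] ℝ) →L[ℝ] H) (J : (Y →L[ℝ] ℝ) → ℝ≥0∞) (f : H)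
    (hproper : IsProperFn J) (hconv : EConvexFn J) (hlsc : WeakStarLSC J) (hhom : AbsOneHom J)
    (hdata : ∀ w, A w = f → J w ≠ 0)
    (α β : ℝ) (hα : 2 ≤ α) (hβ : 1 ≤ β)
    (hex : ∀ t : ℝ, 0 < t → ∃ u, IsMinimizer A J f t α β u)
    (R Jm : ℝ → ℝ)
    (hR : ∀ t : ℝ, 0 < t → ∀ u, IsMinimizer A J f t α β u → R t = ‖A u - f‖)
    (hJm : ∀ t : ℝ, 0 < t → ∀ u, IsMinimizer A J f t α β u → Jm t = (J u).toReal) :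
    ∀ δ : ℝ, 0 < δ → ∃ K₁ K₂ : NNReal,
      LipschitzOnWith K₁ R (Set.Ioi δ) ∧ LipschitzOnWith K₂ Jm (Set.Ioi δ) :=
  residual_and_regularizer_lipschitz_general A J f hconv hhom α β hα hβ hex R Jm hR hJm
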